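/- Every circulant directed graph code is isodual: if C = Γ + ωI with Γ a circulant binary matrix with zero diagonal, then the code generated additively (over GF(2)) by the rows of Cᵀ is obtained from the code generated by the rows of C by the coordinate permutation i ↦ n+1−i. In particular the code is equivalent to its Hermitian trace dual. -/
import Mathlib

abbrev F4 := GaloisField 2 2
noncomputable instance : Fintype F4 := Fintype.ofFinite F4
noncomputable instance : DecidableEq F4 := Classical.decEq F4

/-- The Hermitian trace inner product. -/
noncomputable def trip {ι : Type} [Fintype ι] (u v : ι → F4) : F4 :=
  ∑ i, (u i * (v i) ^ 2 + (u i) ^ 2 * v i)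

lemma two_eq_zero : (2 : F4) = 0 := by
  exact_mod_cast CharP.cast_eq_zero F4 2

lemma bin_add {x y : F4} (hx : x = 0 ∨ x = 1) (hy : y = 0 ∨ y = 1) :
    x + y = 0 ∨ x + y = 1 := by
  rcases hx with rfl | rfl <;> rcases hy with rfl | rfl <;> simp
  linear_combination two_eq_zero

lemma bin_mul {x y : F4} (hx : x = 0 ∨ x = 1) (hy : y = 0 ∨ y = 1) :
    x * y = 0 ∨ x * y = 1 := by
  rcases hx with rfl | rfl <;> rcases hy with rfl | rfl <;> simp

lemma bin_sum {ι : Type*} (s : Finset ι) (f : ι → F4) (h : ∀ i ∈ s, f i = 0 ∨ f i = 1) :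
    (∑ i ∈ s, f i) = 0 ∨ (∑ i ∈ s, f i) = 1 :=
  Finset.sum_induction f (fun z => z = 0 ∨ z = 1) (fun _ _ ha hb => bin_add ha hb)
    (Or.inl rfl) h

lemma key {ω x y s t : F4} (hω : ω ^ 2 = ω + 1)
    (hx : x = 0 ∨ x = 1) (hy : y = 0 ∨ y = 1)
    (hs : s = 0 ∨ s = 1) (ht : t = 0 ∨ t = 1) :
    (x + ω * y) * (s + ω * t) ^ 2 + (x + ω * y) ^ 2 * (s + ω * t) = x * t + y * s := by
  rcases hx with rfl | rfl <;> rcases hy with rfl | rfl <;>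
    rcases hs with rfl | rfl <;> rcases ht with rfl | rfl <;>
    first
      | ring1
      | linear_combination (1 : F4) * two_eq_zero
      | linear_combination hω + ω * two_eq_zero
      | linear_combination hω + (1 + 2*ω) * two_eq_zero
      | linear_combination (2 + 2*ω) * hω + (1 + 2*ω) * two_eq_zero
      | linear_combination (5 + 2*ω) * hω + (2 + 4*ω) * two_eq_zero
      | linear_combination (8 + 2*ω) * hω + (4 + 8*ω) * two_eq_zero

lemma sq_bin {t : F4} (h : t ^ 2 = t) : t = 0 ∨ t = 1 := by
  have h2 : t * (t - 1) = 0 := by linear_combination h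
  rcases mul_eq_zero.mp h2 with h | h
  · exact Or.inl h
  · exact Or.inr (sub_eq_zero.mp h)

lemma decomp (ω : F4) (hω : ω ^ 2 = ω + 1) (a : F4) :
    ∃ x y : F4, (x = 0 ∨ x = 1) ∧ (y = 0 ∨ y = 1) ∧ a = x + ω * y := by
  have h4 : a ^ 4 = a := by
    have h : Fintype.card F4 = 4 := by simpa using GaloisField.card 2 2 (by norm_num)
    have := FiniteField.pow_card a
    rwa [h] at this
  refine ⟨a + ω * (a + a ^ 2), a + a ^ 2, ?_, ?_, ?_⟩
  · apply sq_bin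
    linear_combination (a^2 + a^4 + 2*a^3) * hω + (1 + ω) * h4
      + (a^2 + a^3 + ω*a^2 + 2*ω*a^3) * two_eq_zero
  · apply sq_bin
    linear_combination h4 + a^3 * two_eq_zero
  · linear_combination (-(ω*a) - ω*a^2) * two_eq_zero

theorem circulant_isodual {n : ℕ} [NeZero n]
    (m : ZMod n → F4) (hm0 : m 0 = 0) (hbin : ∀ k, m k = 0 ∨ m k = 1)
    (Γ : Matrix (ZMod n) (ZMod n) F4) (hΓ : ∀ i j, Γ i j = m (j - i))
    (ω : F4) (hω : ω ^ 2 = ω + 1) (C : Matrix (ZMod n) (ZMod n) F4)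
    (hC : C = Γ + ω • 1) :
    {x | ∃ b : ZMod n → F4, (∀ i, b i = 0 ∨ b i = 1) ∧
        x = Matrix.vecMul b C.transpose} =
      (fun u : ZMod n → F4 => fun j => u (1 - j)) ''
        {x | ∃ a : ZMod n → F4, (∀ i, a i = 0 ∨ a i = 1) ∧
          x = Matrix.vecMul a C} ∧
    {u : ZMod n → F4 |
        ∀ c ∈ {x | ∃ a : ZMod n → F4, (∀ i, a i = 0 ∨ a i = 1) ∧
          x = Matrix.vecMul a C}, trip u c = 0} =
      {x | ∃ b : ZMod n → F4, (∀ i, b i = 0 ∨ b i = 1) ∧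
        x = Matrix.vecMul b C.transpose} := by
  have hCe : ∀ i j, C i j = m (j - i) + ω * (if i = j then 1 else 0) := by
    intro i j
    rw [hC]
    simp [Matrix.add_apply, Matrix.smul_apply, Matrix.one_apply, hΓ, mul_ite]
  have hrow : ∀ (a : ZMod n → F4) (j : ZMod n),
      Matrix.vecMul a C j = (∑ i, a i * m (j - i)) + ω * a j := by
    intro a j
    have : Matrix.vecMul a C j = ∑ i, a i * C i j := by
      simp [Matrix.vecMul, dotProduct]
    rw [this]
    have : ∀ i, a i * C i j = a i * m (j - i) + (if i = j then ω * a i else 0) := by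
      intro i
      rw [hCe]
      by_cases h : i = j <;> simp [h] <;> ring
    simp only [this, Finset.sum_add_distrib]
    congr 1
    rw [Finset.sum_ite_eq' Finset.univ j (fun i => ω * a i)]
    simp
  have htrow : ∀ (b : ZMod n → F4) (j : ZMod n),
      Matrix.vecMul b C.transpose j = (∑ k, b k * m (k - j)) + ω * b j := by
    intro b j
    have h1 : Matrix.vecMul b C.transpose j = ∑ k, b k * C j k := by
      simp [Matrix.vecMul, dotProduct, Matrix.transpose_apply]
    rw [h1]
    have : ∀ k, b k * C j k = b k * m (k - j) + (if k = j then ω * b k else 0) := by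
      intro k
      rw [hCe]
      by_cases h : k = j
      · simp [h]; ring
      · have h' : ¬ j = k := fun hh => h hh.symm
        simp [h, h']
    simp only [this, Finset.sum_add_distrib]
    congr 1
    rw [Finset.sum_ite_eq' Finset.univ j (fun k => ω * b k)]
    simp
  have hmain : ∀ (a : ZMod n → F4) (j : ZMod n),
      Matrix.vecMul a C (1 - j) = Matrix.vecMul (fun k => a (1 - k)) C.transpose j := by
    intro a j
    rw [hrow, htrow]
    congr 1
    refine (Fintype.sum_equiv (Equiv.subLeft (1 : ZMod n))
      (fun k => a (1 - k) * m (k - j)) (fun i => a i * m (1 - j - i)) ?_).symm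
    intro k
    simp only [Equiv.subLeft_apply]
    have e1 : (1 : ZMod n) - j - (1 - k) = k - j := by ring
    rw [e1]
  constructor
  · ext x
    simp only [Set.mem_setOf_eq, Set.mem_image]
    constructor
    · rintro ⟨b, hb, rfl⟩
      refine ⟨Matrix.vecMul (fun i => b (1 - i)) C,
        ⟨fun i => b (1 - i), fun i => hb _, rfl⟩, ?_⟩
      funext j
      have := hmain (fun i => b (1 - i)) j
      rw [this]
      congr 1
      funext k
      congr 1
      ring
    · rintro ⟨v, ⟨a, ha, rfl⟩, rfl⟩
      exact ⟨fun k => a (1 - k), fun i => ha _, funext fun j => hmain a j⟩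
  · ext u
    simp only [Set.mem_setOf_eq]
    constructor
    · intro hu
      choose x y hx hy huxy using fun j => decomp ω hω (u j)
      have hxi : ∀ i, x i = ∑ j, y j * m (j - i) := by
        intro i
        have hrowi : ∀ j, Matrix.vecMul (fun k => if k = i then (1:F4) else 0) C j
            = m (j - i) + ω * (if j = i then 1 else 0) := by
          intro j
          rw [hrow]
          congr 1
          simp
        have h0 := hu (Matrix.vecMul (fun k => if k = i then (1:F4) else 0) C)
          ⟨_, fun k => by by_cases h : k = i <;> simp [h], rfl⟩
        rw [trip] at h0
        have hsum : ∀ j, u j * (Matrix.vecMul (fun k => if k = i then (1:F4) else 0) C j) ^ 2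
            + (u j) ^ 2 * (Matrix.vecMul (fun k => if k = i then (1:F4) else 0) C j)
            = x j * (if j = i then 1 else 0) + y j * m (j - i) := by
          intro j
          rw [hrowi j, huxy j]
          exact key hω (hx j) (hy j) (hbin _) (by by_cases h : j = i <;> simp [h])
        rw [Finset.sum_congr rfl (fun j _ => hsum j)] at h0
        rw [Finset.sum_add_distrib] at h0
        have h1 : ∑ j, x j * (if j = i then (1:F4) else 0) = x i := by
          simp [mul_ite]
        rw [h1] at h0
        linear_combination h0 - (∑ j, y j * m (j - i)) * two_eq_zero
      refine ⟨y, hy, ?_⟩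
      funext j
      rw [htrow, huxy j, hxi j]
    · rintro ⟨b, hb, rfl⟩ c ⟨a, ha, rfl⟩
      rw [trip]
      have hsum : ∀ j, (Matrix.vecMul b C.transpose j) * (Matrix.vecMul a C j) ^ 2
          + (Matrix.vecMul b C.transpose j) ^ 2 * (Matrix.vecMul a C j)
          = (∑ k, b k * m (k - j)) * a j + b j * (∑ i, a i * m (j - i)) := by
        intro j
        rw [htrow, hrow]
        exact key hω
          (bin_sum _ _ fun k _ => bin_mul (hb k) (hbin _))
          (hb j)
          (bin_sum _ _ fun i _ => bin_mul (ha i) (hbin _))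
          (ha j)
      rw [Finset.sum_congr rfl (fun j _ => hsum j), Finset.sum_add_distrib]
      have hswap : ∑ j, (∑ k, b k * m (k - j)) * a j
          = ∑ j, b j * (∑ i, a i * m (j - i)) := by
        simp only [Finset.sum_mul, Finset.mul_sum]
        rw [Finset.sum_comm]
        refine Finset.sum_congr rfl fun k _ => Finset.sum_congr rfl fun j _ => by ring
      rw [hswap]
      linear_combination (∑ j, b j * (∑ i, a i * m (j - i))) * two_eq_zero
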